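/- ℐ-orthomodularity: if A ≤ B (i.e., cl A ∪ cl B = cl B), then A ⊔ (A ⊔ B^⊥)^⊥ = cl B, where A^⊥ = (cl A)ᶜ, A ⊓ B = cl (A ∩ B), A ⊔ B = cl A ∪ cl B. Moreover, A ⊥ B (defined as A ≤ B^⊥) holds if and only if A ∩ cl B = ∅. -/
import Mathlib

theorem stmt (E : Type*) (r : E → E → Prop) (hr : Equivalence r)
    (cl : Set E → Set E) (hcl : ∀ A, cl A = {y | ∃ x ∈ A, r y x}) :
    (∀ A B : Set E, cl A ∪ cl B = cl B → cl A ∪ cl ((cl A ∪ cl ((cl B)ᶜ))ᶜ) = cl B) ∧ (∀ A B : Set E, (cl A ∪ cl ((cl B)ᶜ) = cl ((cl B)ᶜ)) ↔ A ∩ cl B = ∅) := by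
  have mem_cl : ∀ (A : Set E) (y : E), y ∈ cl A ↔ ∃ x ∈ A, r y x := by
    intro A y; rw [hcl]; rfl
  have sub : ∀ A : Set E, A ⊆ cl A := by
    intro A x hx; exact (mem_cl A x).2 ⟨x, hx, hr.refl x⟩
  -- saturated sets
  have sat_cl : ∀ (A : Set E) (y x : E), x ∈ cl A → r y x → y ∈ cl A := by
    intro A y x hx hyx
    obtain ⟨z, hz, hxz⟩ := (mem_cl A x).1 hx
    exact (mem_cl A y).2 ⟨z, hz, hr.trans hyx hxz⟩
  have cl_fix : ∀ (S : Set E), (∀ y x, x ∈ S → r y x → y ∈ S) → cl S = S := by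
    intro S hS
    ext y; rw [mem_cl]
    exact ⟨fun ⟨x, hx, h⟩ => hS y x hx h, fun h => ⟨y, h, hr.refl y⟩⟩
  have sat_compl : ∀ (S : Set E), (∀ y x, x ∈ S → r y x → y ∈ S) →
      (∀ y x, x ∈ Sᶜ → r y x → y ∈ Sᶜ) := by
    intro S hS y x hx hyx hy
    exact hx (hS x y hy (hr.symm hyx))
  constructor
  · intro A B hAB
    have hsub : cl A ⊆ cl B := by rw [← hAB]; exact Set.subset_union_left
    have h1 : cl ((cl B)ᶜ) = (cl B)ᶜ := cl_fix _ (sat_compl _ (sat_cl B))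
    rw [h1]
    have h2 : (cl A ∪ (cl B)ᶜ)ᶜ = (cl A)ᶜ ∩ cl B := by
      rw [Set.compl_union, compl_compl]
    rw [h2]
    have h3 : cl ((cl A)ᶜ ∩ cl B) = (cl A)ᶜ ∩ cl B := by
      apply cl_fix
      intro y x hx hyx
      exact ⟨sat_compl _ (sat_cl A) y x hx.1 hyx, sat_cl B y x hx.2 hyx⟩
    rw [h3]
    ext y
    constructor
    · rintro (h | h)
      · exact hsub h
      · exact h.2
    · intro h
      by_cases hy : y ∈ cl A
      · exact Or.inl hy
      · exact Or.inr ⟨hy, h⟩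
  · intro A B
    have h1 : cl ((cl B)ᶜ) = (cl B)ᶜ := cl_fix _ (sat_compl _ (sat_cl B))
    rw [h1]
    constructor
    · intro h
      ext x
      simp only [Set.mem_inter_iff, Set.mem_empty_iff_false, iff_false, not_and]
      intro hx hxB
      have : x ∈ cl A ∪ (cl B)ᶜ := Or.inl (sub A hx)
      rw [h] at this
      exact this hxB
    · intro h
      apply Set.union_eq_self_of_subset_left
      intro y hy hyB
      obtain ⟨x, hx, hyx⟩ := (mem_cl A y).1 hy
      have : x ∈ cl B := sat_cl B x y hyB (hr.symm hyx)
      exact Set.eq_empty_iff_forall_notMem.1 h x ⟨hx, this⟩
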